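/- arXiv:2206.02109 — 5 statements merged into one kernel-verified Lean document; each statement's English description precedes it below -/
import Mathlib

section
/- Let θ_l, θ_{l'} ∈ ℝ satisfy sin((π/2)(cos θ_l − cos θ_{l'})) ≠ 0, and let α_l, α_{l'} ∈ ℂ be nonzero. For each integer M ≥ 1 define ρ_{l,l'}(M) := |h_l^H h_{l'}|² / (‖h_l‖² ‖h_{l'}‖²) where h_l = α_l a(θ_l) ∈ ℂ^M and h_{l'} = α_{l'} a(θ_{l'}) ∈ ℂ^M are built from the M-element steering vectors. Then ρ_{l,l'}(M) → 0 as M → ∞; i.e., channel vectors of multi-paths with distinct (non-aliasing) angles of departure become asymptotically orthogonal as the number of antennas grows. -/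
open Complex Filter Finset

/-- For two paths with non-aliasing angles of departure
(`sin((π/2)(cos θ_l − cos θ_{l'})) ≠ 0`) and nonzero complex gains, the squared
normalized correlation `ρ_{l,l'}(M) = |h_l^H h_{l'}|² / (‖h_l‖² ‖h_{l'}‖²)` of the
`M`-antenna half-wavelength ULA channel vectors `h_l = α_l a(θ_l)`,
`h_{l'} = α_{l'} a(θ_{l'})` tends to `0` as `M → ∞`: the channel vectors become
asymptotically orthogonal. -/
theorem steering_vectors_asymptotically_orthogonal
    (θl θl' : ℝ)
    (hsin : Real.sin (Real.pi / 2 * (Real.cos θl - Real.cos θl')) ≠ 0)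
    (αl αl' : ℂ) (hαl : αl ≠ 0) (hαl' : αl' ≠ 0) :
    Filter.Tendsto
      (fun M : ℕ =>
        ‖∑ m : Fin M,
            (starRingEnd ℂ)
              (αl * Complex.exp (-(Complex.I * (Real.pi : ℂ) * (m.1 : ℂ) * (Real.cos θl : ℂ)))) *
            (αl' * Complex.exp (-(Complex.I * (Real.pi : ℂ) * (m.1 : ℂ) * (Real.cos θl' : ℂ))))‖ ^ 2 /
          ((∑ m : Fin M,
              ‖αl * Complex.exp (-(Complex.I * (Real.pi : ℂ) * (m.1 : ℂ) * (Real.cos θl : ℂ)))‖ ^ 2) *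
            (∑ m : Fin M,
              ‖αl' * Complex.exp (-(Complex.I * (Real.pi : ℂ) * (m.1 : ℂ) * (Real.cos θl' : ℂ)))‖ ^ 2)))
      Filter.atTop (nhds 0) := by
  set c1 := Real.cos θl with hc1
  set c2 := Real.cos θl' with hc2
  set z : ℂ := Complex.exp (Complex.I * (Real.pi : ℂ) * ((c1 : ℂ) - (c2 : ℂ))) with hzdef
  have hπ : (Real.pi : ℂ) ≠ 0 := by exact_mod_cast Real.pi_ne_zero
  have hz1 : z ≠ 1 := by
    intro h
    rw [hzdef, Complex.exp_eq_one_iff] at h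
    obtain ⟨n, hn⟩ := h
    have hd : ((c1 : ℂ) - c2) = 2 * n := by
      have hIπ : Complex.I * (Real.pi : ℂ) ≠ 0 := mul_ne_zero Complex.I_ne_zero hπ
      have : Complex.I * (Real.pi : ℂ) * ((c1 : ℂ) - c2) =
          Complex.I * (Real.pi : ℂ) * (2 * n) := by rw [hn]; ring
      exact mul_left_cancel₀ hIπ this
    have hdr : c1 - c2 = 2 * (n : ℝ) := by exact_mod_cast hd
    apply hsin
    rw [hdr]
    have : Real.pi / 2 * (2 * (n : ℝ)) = (n : ℝ) * Real.pi := by ring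
    rw [this]
    exact Real.sin_int_mul_pi n
  have hnorm_exp : ∀ (m : ℕ) (c : ℝ),
      ‖Complex.exp (-(Complex.I * (Real.pi : ℂ) * (m : ℂ) * (c : ℂ)))‖ = 1 := by
    intro m c
    rw [Complex.norm_exp]
    simp [Complex.mul_re, Complex.mul_im]
  have key : ∀ M : ℕ,
      (‖∑ m : Fin M,
            (starRingEnd ℂ)
              (αl * Complex.exp (-(Complex.I * (Real.pi : ℂ) * (m.1 : ℂ) * (c1 : ℂ)))) *
            (αl' * Complex.exp (-(Complex.I * (Real.pi : ℂ) * (m.1 : ℂ) * (c2 : ℂ))))‖ ^ 2 /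
          ((∑ m : Fin M,
              ‖αl * Complex.exp (-(Complex.I * (Real.pi : ℂ) * (m.1 : ℂ) * (c1 : ℂ)))‖ ^ 2) *
            (∑ m : Fin M,
              ‖αl' * Complex.exp (-(Complex.I * (Real.pi : ℂ) * (m.1 : ℂ) * (c2 : ℂ)))‖ ^ 2))) =
      ‖∑ m : Fin M, z ^ (m.1)‖ ^ 2 / (M : ℝ) ^ 2 := by
    intro M
    have hterm : ∀ m : Fin M,
        (starRingEnd ℂ)
              (αl * Complex.exp (-(Complex.I * (Real.pi : ℂ) * (m.1 : ℂ) * (c1 : ℂ)))) *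
            (αl' * Complex.exp (-(Complex.I * (Real.pi : ℂ) * (m.1 : ℂ) * (c2 : ℂ)))) =
        ((starRingEnd ℂ) αl * αl') * z ^ (m.1) := by
      intro m
      rw [map_mul]
      have hconj : (starRingEnd ℂ)
          (Complex.exp (-(Complex.I * (Real.pi : ℂ) * (m.1 : ℂ) * (c1 : ℂ)))) =
          Complex.exp (Complex.I * (Real.pi : ℂ) * (m.1 : ℂ) * (c1 : ℂ)) := by
        rw [← Complex.exp_conj]
        congr 1
        simp [map_mul, Complex.conj_I]
      rw [hconj]
      have hmul : Complex.exp (Complex.I * (Real.pi : ℂ) * (m.1 : ℂ) * (c1 : ℂ)) *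
          Complex.exp (-(Complex.I * (Real.pi : ℂ) * (m.1 : ℂ) * (c2 : ℂ))) =
          z ^ (m.1 : ℕ) := by
        rw [hzdef, ← Complex.exp_nat_mul, ← Complex.exp_add]
        congr 1
        push_cast
        ring
      calc (starRingEnd ℂ) αl * Complex.exp (Complex.I * (Real.pi : ℂ) * (m.1 : ℂ) * (c1 : ℂ)) *
            (αl' * Complex.exp (-(Complex.I * (Real.pi : ℂ) * (m.1 : ℂ) * (c2 : ℂ))))
          = (starRingEnd ℂ) αl * αl' *
            (Complex.exp (Complex.I * (Real.pi : ℂ) * (m.1 : ℂ) * (c1 : ℂ)) *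
             Complex.exp (-(Complex.I * (Real.pi : ℂ) * (m.1 : ℂ) * (c2 : ℂ)))) := by ring
        _ = (starRingEnd ℂ) αl * αl' * z ^ (m.1 : ℕ) := by rw [hmul]
    have hnum : ∑ m : Fin M,
        (starRingEnd ℂ)
              (αl * Complex.exp (-(Complex.I * (Real.pi : ℂ) * (m.1 : ℂ) * (c1 : ℂ)))) *
            (αl' * Complex.exp (-(Complex.I * (Real.pi : ℂ) * (m.1 : ℂ) * (c2 : ℂ)))) =
        ((starRingEnd ℂ) αl * αl') * ∑ m : Fin M, z ^ (m.1) := by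
      rw [Finset.mul_sum]
      exact Finset.sum_congr rfl fun m _ => hterm m
    have hden1 : (∑ m : Fin M,
        ‖αl * Complex.exp (-(Complex.I * (Real.pi : ℂ) * (m.1 : ℂ) * (c1 : ℂ)))‖ ^ 2) =
        (M : ℝ) * ‖αl‖ ^ 2 := by
      have : ∀ m : Fin M,
          ‖αl * Complex.exp (-(Complex.I * (Real.pi : ℂ) * (m.1 : ℂ) * (c1 : ℂ)))‖ ^ 2 =
          ‖αl‖ ^ 2 := by
        intro m; rw [norm_mul, hnorm_exp m.1 c1, mul_one]
      rw [Finset.sum_congr rfl fun m _ => this m, Finset.sum_const, Finset.card_univ,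
        Fintype.card_fin, nsmul_eq_mul]
    have hden2 : (∑ m : Fin M,
        ‖αl' * Complex.exp (-(Complex.I * (Real.pi : ℂ) * (m.1 : ℂ) * (c2 : ℂ)))‖ ^ 2) =
        (M : ℝ) * ‖αl'‖ ^ 2 := by
      have : ∀ m : Fin M,
          ‖αl' * Complex.exp (-(Complex.I * (Real.pi : ℂ) * (m.1 : ℂ) * (c2 : ℂ)))‖ ^ 2 =
          ‖αl'‖ ^ 2 := by
        intro m; rw [norm_mul, hnorm_exp m.1 c2, mul_one]
      rw [Finset.sum_congr rfl fun m _ => this m, Finset.sum_const, Finset.card_univ,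
        Fintype.card_fin, nsmul_eq_mul]
    rw [hnum, hden1, hden2, norm_mul, norm_mul, RCLike.norm_conj]
    have hA : ‖αl‖ ^ 2 * ‖αl'‖ ^ 2 ≠ 0 :=
      mul_ne_zero (pow_ne_zero _ (norm_ne_zero_iff.2 hαl))
        (pow_ne_zero _ (norm_ne_zero_iff.2 hαl'))
    calc (‖αl‖ * ‖αl'‖ * ‖∑ m : Fin M, z ^ m.1‖) ^ 2 /
          ((M : ℝ) * ‖αl‖ ^ 2 * ((M : ℝ) * ‖αl'‖ ^ 2))
        = (‖αl‖ ^ 2 * ‖αl'‖ ^ 2) * ‖∑ m : Fin M, z ^ m.1‖ ^ 2 /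
          ((‖αl‖ ^ 2 * ‖αl'‖ ^ 2) * (M : ℝ) ^ 2) := by ring
      _ = ‖∑ m : Fin M, z ^ m.1‖ ^ 2 / (M : ℝ) ^ 2 := mul_div_mul_left _ _ hA
  simp only [key]
  -- bound the geometric sum
  have hzabs : ‖z‖ = 1 := by
    rw [hzdef, Complex.norm_exp]
    simp [Complex.mul_re, Complex.mul_im]
  have hz1' : z - 1 ≠ 0 := sub_ne_zero.2 hz1
  set C : ℝ := (2 / ‖z - 1‖) ^ 2 with hCdef
  have hCnn : 0 ≤ 2 / ‖z - 1‖ := by positivity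
  have hbound : ∀ M : ℕ, ‖∑ m : Fin M, z ^ m.1‖ ^ 2 / (M : ℝ) ^ 2 ≤ C / (M : ℝ) ^ 2 := by
    intro M
    have hS : ‖∑ m : Fin M, z ^ m.1‖ ≤ 2 / ‖z - 1‖ := by
      have : (∑ m : Fin M, z ^ (m.1 : ℕ)) = ∑ i ∈ Finset.range M, z ^ i :=
        Fin.sum_univ_eq_sum_range (fun i => z ^ i) M
      rw [this, geom_sum_eq hz1, norm_div]
      apply div_le_div_of_nonneg_right ?h (norm_nonneg _)
      case h =>
        calc ‖z ^ M - 1‖ ≤ ‖z ^ M‖ + ‖(1 : ℂ)‖ := norm_sub_le _ _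
          _ = 2 := by rw [norm_pow, hzabs]; norm_num
    gcongr
    calc ‖∑ m : Fin M, z ^ m.1‖ ^ 2 ≤ (2 / ‖z - 1‖) ^ 2 :=
      pow_le_pow_left₀ (norm_nonneg _) hS 2
      _ = C := rfl
  have hCtend : Tendsto (fun M : ℕ => C / (M : ℝ) ^ 2) atTop (nhds 0) := by
    apply Tendsto.div_atTop tendsto_const_nhds
    exact (tendsto_pow_atTop two_ne_zero).comp tendsto_natCast_atTop_atTop
  exact squeeze_zero (fun M => by positivity) hbound hCtend
end

section
/- Let h_1,…,h_L ∈ ℂ^M and let n_1 < n_2 < ⋯ < n_L be integers with n_max := n_L. Fix integers 1 ≤ L' ≤ L and D ≥ 0, and set the delay pre-compensations κ_{l'} := n_max − n_{L−L'+l'} for l' = 1,…,L'. For each l' let L_{l'} := {l ∈ {1,…,L} : n_l + κ_{l'} ∉ [n_max − D, n_max]} be the set of paths falling outside the desired delay window, and suppose the time-domain beamforming matrices F_{l'} ∈ ℂ^{M×M} satisfy the zero-forcing conditions h_l^H F_{l'} = 0 (the zero row vector) for every l ∈ L_{l'}. For t ∈ {0,…,D} define the effective channel g_{l'}[t] :=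 h_l if there exists l ∉ L_{l'} with n_l + κ_{l'} = t + n_max − D, and g_{l'}[t] := 0 otherwise. Then for every sequence d : ℤ → ℂ^M and every i ∈ ℤ, Σ_{l=1}^L Σ_{l'=1}^{L'} h_l^H F_{l'} d[i − n_l − κ_{l'}] = Σ_{t=0}^{D} (Σ_{l'=1}^{L'} g_{l'}^H[t] F_{l'}) d[i − t − (n_max − D)]; i.e., the signal d experiences an effective multi-path channel whose delay spread is at most D. -/
private lemma dot_mulVec {M : ℕ} (c : Fin M → ℂ) (F : Matrix (Fin M) (Fin M) ℂ) (w : Fin M → ℂ) :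
    ∑ j, c j * F.mulVec w j = ∑ k, (∑ j, c j * F j k) * w k := by
  simp only [Matrix.mulVec, dotProduct, Finset.mul_sum, Finset.sum_mul]
  rw [Finset.sum_comm]
  exact Finset.sum_congr rfl fun k _ => Finset.sum_congr rfl fun j _ => by ring

/-- Generic delay alignment modulation reduces the channel delay spread to at most `D`:
with delay pre-compensations `κ_{l'} = n_max − n_{L−L'+l'}`, time-domain beamforming
matrices `F_{l'}` zero-forcing all paths falling outside the window
`[n_max − D, n_max]`, and effective channel taps `g_{l'}[t]`, for every sequence
`d : ℤ → ℂ^M` and time `i`,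
`Σ_l Σ_{l'} h_l^H F_{l'} d[i − n_l − κ_{l'}]
  = Σ_{t=0}^{D} (Σ_{l'} g_{l'}^H[t] F_{l'}) d[i − t − (n_max − D)]`. -/
theorem dam_reduced_delay_spread
    (M L L' : ℕ) (hL : 1 ≤ L) (hL'1 : 1 ≤ L') (hL'L : L' ≤ L) (D : ℕ)
    (h : Fin L → Fin M → ℂ)
    (n : Fin L → ℤ) (hmono : StrictMono n)
    (nmax : ℤ) (hnmax : nmax = n ⟨L - 1, by omega⟩)
    (κ : Fin L' → ℤ)
    (hκ : ∀ l' : Fin L', κ l' = nmax - n ⟨L - L' + l'.1, by omega⟩)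
    (F : Fin L' → Matrix (Fin M) (Fin M) ℂ)
    (hzf : ∀ (l' : Fin L') (l : Fin L),
      (n l + κ l' < nmax - (D : ℤ) ∨ nmax < n l + κ l') →
      ∀ j : Fin M, (∑ i : Fin M, (starRingEnd ℂ) (h l i) * F l' i j) = 0)
    (g : Fin L' → ℕ → Fin M → ℂ)
    (hg1 : ∀ (l' : Fin L') (t : ℕ) (l : Fin L), t ≤ D →
      ¬(n l + κ l' < nmax - (D : ℤ) ∨ nmax < n l + κ l') →
      n l + κ l' = (t : ℤ) + (nmax - (D : ℤ)) → g l' t = h l)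
    (hg2 : ∀ (l' : Fin L') (t : ℕ), t ≤ D →
      (¬ ∃ l : Fin L, ¬(n l + κ l' < nmax - (D : ℤ) ∨ nmax < n l + κ l') ∧
          n l + κ l' = (t : ℤ) + (nmax - (D : ℤ))) → g l' t = 0)
    (d : ℤ → Fin M → ℂ) (i : ℤ) :
    ∑ l : Fin L, ∑ l' : Fin L',
        ∑ j : Fin M, (starRingEnd ℂ) (h l j) * ((F l').mulVec (d (i - n l - κ l'))) j =
      ∑ t ∈ Finset.range (D + 1), ∑ l' : Fin L',
        ∑ j : Fin M,
          (starRingEnd ℂ) (g l' t j) * ((F l').mulVec (d (i - (t : ℤ) - (nmax - (D : ℤ))))) j := by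
  conv_lhs => rw [Finset.sum_comm]
  conv_rhs => rw [Finset.sum_comm]
  refine Finset.sum_congr rfl fun l' _ => ?_
  -- LHS restrict to paths inside the window
  have hlhs :
      ∑ l : Fin L, ∑ j : Fin M,
          (starRingEnd ℂ) (h l j) * ((F l').mulVec (d (i - n l - κ l'))) j
        = ∑ l ∈ Finset.univ.filter
            (fun l : Fin L => ¬(n l + κ l' < nmax - (D : ℤ) ∨ nmax < n l + κ l')),
            ∑ j : Fin M,
              (starRingEnd ℂ) (h l j) * ((F l').mulVec (d (i - n l - κ l'))) j := by
    symm
    apply Finset.sum_filter_of_ne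
    intro l _ hne
    by_contra hout
    apply hne
    rw [dot_mulVec]
    simp [hzf l' l hout]
  -- RHS restrict to taps hit by some path
  have hrhs :
      ∑ t ∈ Finset.range (D + 1), ∑ j : Fin M,
          (starRingEnd ℂ) (g l' t j) *
            ((F l').mulVec (d (i - (t : ℤ) - (nmax - (D : ℤ))))) j
        = ∑ t ∈ (Finset.range (D + 1)).filter
            (fun t : ℕ => ∃ l : Fin L,
              ¬(n l + κ l' < nmax - (D : ℤ) ∨ nmax < n l + κ l') ∧
              n l + κ l' = (t : ℤ) + (nmax - (D : ℤ))),
            ∑ j : Fin M,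
              (starRingEnd ℂ) (g l' t j) *
                ((F l').mulVec (d (i - (t : ℤ) - (nmax - (D : ℤ))))) j := by
    symm
    apply Finset.sum_filter_of_ne
    intro t ht hne
    by_contra hq
    apply hne
    have ht' : t ≤ D := by
      simpa using Nat.lt_succ_iff.mp (Finset.mem_range.mp ht)
    rw [hg2 l' t ht' hq]
    simp
  rw [hlhs, hrhs]
  refine Finset.sum_bij
    (fun (l : Fin L) _ => (n l + κ l' - (nmax - (D : ℤ))).toNat) ?_ ?_ ?_ ?_
  · intro l hl
    simp only [Finset.mem_filter, Finset.mem_univ, true_and] at hl ⊢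
    push_neg at hl
    refine ⟨Finset.mem_range.mpr (by omega), l, ?_, by omega⟩
    push_neg
    exact hl
  · intro l1 hl1 l2 hl2 heq
    simp only [Finset.mem_filter, Finset.mem_univ, true_and] at hl1 hl2
    push_neg at hl1 hl2
    have heq' : (n l1 + κ l' - (nmax - (D : ℤ))).toNat
        = (n l2 + κ l' - (nmax - (D : ℤ))).toNat := heq
    have : n l1 = n l2 := by omega
    exact hmono.injective this
  · intro t ht
    simp only [Finset.mem_filter, Finset.mem_range] at ht
    obtain ⟨htD, l, hin, heq⟩ := ht
    refine ⟨l, Finset.mem_filter.mpr ⟨Finset.mem_univ l, hin⟩, ?_⟩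
    show (n l + κ l' - (nmax - (D : ℤ))).toNat = t
    omega
  · intro l hl
    simp only [Finset.mem_filter, Finset.mem_univ, true_and] at hl
    have hb : nmax - (D : ℤ) ≤ n l + κ l' ∧ n l + κ l' ≤ nmax := by push_neg at hl; exact hl
    set t : ℕ := (n l + κ l' - (nmax - (D : ℤ))).toNat with htdef
    have ht1 : t ≤ D := by omega
    have ht2 : n l + κ l' = (t : ℤ) + (nmax - (D : ℤ)) := by omega
    rw [hg1 l' t l ht1 hl ht2]
    have : i - n l - κ l' = i - (t : ℤ) - (nmax - (D : ℤ)) := by omega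
    rw [this]
end

section
/- (Transmit power of DAM-OFDM.) Let K ≥ 1 and N_CP ≥ 0 be integers, u_0,…,u_{K−1} ∈ ℂ^M, F_1,…,F_{L'} ∈ ℂ^{M×M}, and let κ_1,…,κ_{L'} be pairwise distinct nonnegative integers. Let (Ω, ℙ) be a probability space and let s[m,k], for m ∈ ℤ and k ∈ {0,…,K−1}, be square-integrable complex random variables with E[s[m,k] · conj(s[m',k'])] = 1 if (m,k) = (m',k') and 0 otherwise. For i ∈ ℤ set m(i) := ⌊(i + N_CP)/(K + N_CP)⌋ and n(i) := ((i + N_CP) mod (K + N_CP)) − N_CP, define the CP-OFDM time-domain signal d[i] := (1/√K) Σ_{k=0}^{K−1} u_k s[m(i), k] e^{i 2π k n(i)/K}, and the DAM-OFDM transmit signal q̄[i] := Σ_{l=1}^{L'} F_l d[i − κ_l]. Then for every i ∈ ℤ such that n(i) − κ_l + N_CP ≥ 0 for all l = 1,…,L' (so that all delayed samples belong to the same OFDM symbol), the transmit power satisfies E[‖q̄[i]‖²] = (1/K) Σ_{k=0}^{K−1} ‖Σ_{l=1}^{L'} F_l u_k e^{−i 2π k κ_l/K}‖². -/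
open MeasureTheory

private lemma mul_conj_integrable {Ω : Type*} [MeasurableSpace Ω] {ℙ : Measure Ω}
    {f g : Ω → ℂ} (hf : MemLp f 2 ℙ) (hg : MemLp g 2 ℙ) :
    Integrable (fun ω => f ω * (starRingEnd ℂ) (g ω)) ℙ := by
  have h := L2.integrable_inner (𝕜 := ℂ) (hg.toLp g) (hf.toLp f)
  refine h.congr ?_
  filter_upwards [hg.coeFn_toLp, hf.coeFn_toLp] with ω h1 h2
  simp only [RCLike.inner_apply, h1, h2]

private lemma norm_sq_sum_aux {Ω : Type*} [MeasurableSpace Ω] (ℙ : Measure Ω)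
    {n : ℕ} (f : Fin n → Ω → ℂ) (hf : ∀ k, MemLp (f k) 2 ℙ)
    (horth : ∀ k k' : Fin n,
      ∫ ω, f k ω * (starRingEnd ℂ) (f k' ω) ∂ℙ = if k = k' then 1 else 0)
    (a : Fin n → ℂ) :
    Integrable (fun ω => ‖∑ k, a k * f k ω‖ ^ 2) ℙ ∧
      ∫ ω, ‖∑ k, a k * f k ω‖ ^ 2 ∂ℙ = ∑ k, ‖a k‖ ^ 2 := by
  set h : Ω → ℂ := fun ω => ∑ k, ∑ k',
      (a k * (starRingEnd ℂ) (a k')) * (f k ω * (starRingEnd ℂ) (f k' ω)) with hh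
  have hint : ∀ (k k' : Fin n), Integrable
      (fun ω => (a k * (starRingEnd ℂ) (a k')) * (f k ω * (starRingEnd ℂ) (f k' ω))) ℙ :=
    fun k k' => (mul_conj_integrable (hf k) (hf k')).const_mul _
  have hH : Integrable h ℙ :=
    integrable_finset_sum _ fun k _ => integrable_finset_sum _ fun k' _ => hint k k'
  have hpt : ∀ ω, (‖∑ k, a k * f k ω‖ : ℝ) ^ 2 = (h ω).re := by
    intro ω
    have he : h ω = (∑ k, a k * f k ω) * (starRingEnd ℂ) (∑ k, a k * f k ω) := by
      rw [hh, map_sum, Finset.sum_mul_sum]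
      refine Finset.sum_congr rfl fun k _ => Finset.sum_congr rfl fun k' _ => ?_
      simp only [map_mul]; ring
    rw [he, Complex.mul_conj, Complex.ofReal_re, Complex.normSq_eq_norm_sq]
  have hfun : (fun ω => (‖∑ k, a k * f k ω‖ : ℝ) ^ 2) = fun ω => (h ω).re := funext hpt
  constructor
  · rw [hfun]
    simpa using hH.re
  · rw [hfun]
    have hI : ∫ ω, h ω ∂ℙ = ∑ k, a k * (starRingEnd ℂ) (a k) := by
      rw [hh, integral_finset_sum _ fun k _ => integrable_finset_sum _ fun k' _ => hint k k']
      have step : ∀ k : Fin n, ∫ ω, ∑ k', (a k * (starRingEnd ℂ) (a k')) *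
          (f k ω * (starRingEnd ℂ) (f k' ω)) ∂ℙ = a k * (starRingEnd ℂ) (a k) := by
        intro k
        rw [integral_finset_sum _ fun k' _ => hint k k']
        have : ∀ k' : Fin n, ∫ ω, (a k * (starRingEnd ℂ) (a k')) *
            (f k ω * (starRingEnd ℂ) (f k' ω)) ∂ℙ =
            (a k * (starRingEnd ℂ) (a k')) * (if k = k' then 1 else 0) := fun k' => by
          rw [integral_const_mul, horth]
        rw [Finset.sum_congr rfl fun k' _ => this k']
        simp
      exact Finset.sum_congr rfl fun k _ => step k
    have := integral_re (𝕜 := ℂ) hH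
    simp only [RCLike.re_to_complex] at this
    rw [this, hI, Complex.re_sum]
    refine Finset.sum_congr rfl fun k _ => ?_
    rw [Complex.mul_conj, Complex.ofReal_re, Complex.normSq_eq_norm_sq]

/-- Transmit power of DAM-OFDM (paper's Theorem 1). With i.i.d. unit-power symbols
`s[m,k]`, CP-OFDM time-domain signal
`d[i] = (1/√K) Σ_k u_k s[m(i),k] e^{i2πk n(i)/K}` (where `m(i), n(i)` are the OFDM
symbol index and within-block sample number of time index `i`), and DAM transmit
signal `q̄[i] = Σ_l F_l d[i − κ_l]`, for every `i` whose delayed samples all stay in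
the same OFDM symbol (`n(i) − κ_l + N_CP ≥ 0` for all `l`), the transmit power is
`E[‖q̄[i]‖²] = (1/K) Σ_k ‖Σ_l F_l u_k e^{−i2πkκ_l/K}‖²`. -/
theorem dam_ofdm_transmit_power
    (Mt K NCP L' : ℕ) (hK : 1 ≤ K)
    (u : Fin K → Fin Mt → ℂ)
    (F : Fin L' → Matrix (Fin Mt) (Fin Mt) ℂ)
    (κ : Fin L' → ℕ) (hκ : Function.Injective κ)
    {Ω : Type*} [MeasurableSpace Ω] (ℙ : Measure Ω) [IsProbabilityMeasure ℙ]
    (s : ℤ → Fin K → Ω → ℂ)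
    (hs2 : ∀ m k, MemLp (s m k) 2 ℙ)
    (hsorth : ∀ (m m' : ℤ) (k k' : Fin K),
      ∫ ω, s m k ω * (starRingEnd ℂ) (s m' k' ω) ∂ℙ =
        if m = m' ∧ k = k' then 1 else 0)
    (msym nsym : ℤ → ℤ)
    (hm : ∀ i : ℤ, msym i = (i + (NCP : ℤ)) / ((K : ℤ) + (NCP : ℤ)))
    (hn : ∀ i : ℤ, nsym i = (i + (NCP : ℤ)) % ((K : ℤ) + (NCP : ℤ)) - (NCP : ℤ))
    (d : ℤ → Ω → Fin Mt → ℂ)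
    (hd : ∀ (i : ℤ) (ω : Ω) (j : Fin Mt),
      d i ω j = (1 / (Real.sqrt K : ℂ)) *
        ∑ k : Fin K, u k j * s (msym i) k ω *
          Complex.exp (Complex.I * 2 * (Real.pi : ℂ) * (k.1 : ℂ) * ((nsym i : ℤ) : ℂ) / (K : ℂ)))
    (i : ℤ)
    (hwin : ∀ l : Fin L', 0 ≤ nsym i - (κ l : ℤ) + (NCP : ℤ)) :
    ∫ ω, ∑ j : Fin Mt, ‖∑ l : Fin L', ((F l).mulVec (d (i - (κ l : ℤ)) ω)) j‖ ^ 2 ∂ℙ =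
      (1 / (K : ℝ)) * ∑ k : Fin K, ∑ j : Fin Mt,
        ‖∑ l : Fin L', ((F l).mulVec (u k)) j *
            Complex.exp (-(Complex.I * 2 * (Real.pi : ℂ) * (k.1 : ℂ) * ((κ l : ℕ) : ℂ) / (K : ℂ)))‖ ^ 2 := by
  set T : ℤ := (K : ℤ) + (NCP : ℤ) with hTdef
  have hK1 : (1 : ℤ) ≤ (K : ℤ) := by exact_mod_cast hK
  have hT : (0 : ℤ) < T := by rw [hTdef]; have : (0:ℤ) ≤ NCP := Int.ofNat_nonneg NCP; linarith
  set q : ℤ := (i + (NCP : ℤ)) / T with hq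
  set r : ℤ := (i + (NCP : ℤ)) % T with hr
  have hdm : T * q + r = i + (NCP : ℤ) := Int.mul_ediv_add_emod _ _
  have hr0 : 0 ≤ r := Int.emod_nonneg _ (ne_of_gt hT)
  have hrT : r < T := Int.emod_lt_of_pos _ hT
  have hrκ : ∀ l : Fin L', (κ l : ℤ) ≤ r := by
    intro l
    have hw := hwin l
    rw [hn i, ← hr] at hw
    linarith
  have hkey : ∀ l : Fin L', i - (κ l : ℤ) + (NCP : ℤ) = (r - (κ l : ℤ)) + q * T := by
    intro l; linear_combination -hdm
  have hmshift : ∀ l : Fin L', msym (i - (κ l : ℤ)) = msym i := by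
    intro l
    rw [hm, hm, ← hq, hkey l,
      Int.add_mul_ediv_right _ _ (ne_of_gt hT),
      Int.ediv_eq_zero_of_lt (by have := hrκ l; linarith) (by have : (0:ℤ) ≤ (κ l : ℤ) := Int.ofNat_nonneg _; linarith),
      zero_add]
  have hnshift : ∀ l : Fin L', nsym (i - (κ l : ℤ)) = nsym i - (κ l : ℤ) := by
    intro l
    rw [hn, hn, ← hr, hkey l, Int.add_mul_emod_self_right,
      Int.emod_eq_of_lt (by have := hrκ l; linarith) (by have : (0:ℤ) ≤ (κ l : ℤ) := Int.ofNat_nonneg _; linarith)]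
    ring
  have hKC : (K : ℂ) ≠ 0 := by exact_mod_cast (by omega : K ≠ 0)
  -- coefficients
  set M : ℤ := msym i with hM
  set c : Fin K → Fin Mt → ℂ := fun k j => ∑ l : Fin L', ((F l).mulVec (u k)) j *
      Complex.exp (-(Complex.I * 2 * (Real.pi : ℂ) * (k.1 : ℂ) * ((κ l : ℕ) : ℂ) / (K : ℂ))) with hc
  set Ek : Fin K → ℂ := fun k =>
      Complex.exp (Complex.I * 2 * (Real.pi : ℂ) * (k.1 : ℂ) * ((nsym i : ℤ) : ℂ) / (K : ℂ)) with hEk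
  set a : Fin K → Fin Mt → ℂ := fun k j => (1 / (Real.sqrt K : ℂ)) * (Ek k * c k j) with ha
  have hsplit : ∀ (l : Fin L') (k : Fin K),
      Complex.exp (Complex.I * 2 * (Real.pi : ℂ) * (k.1 : ℂ) * ((nsym (i - (κ l : ℤ)) : ℤ) : ℂ) / (K : ℂ))
        = Ek k * Complex.exp (-(Complex.I * 2 * (Real.pi : ℂ) * (k.1 : ℂ) * ((κ l : ℕ) : ℂ) / (K : ℂ))) := by
    intro l k
    rw [hEk, ← Complex.exp_add, hnshift l]
    congr 1
    push_cast
    ring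
  have hpt : ∀ (ω : Ω) (j : Fin Mt),
      (∑ l : Fin L', ((F l).mulVec (d (i - (κ l : ℤ)) ω)) j) = ∑ k : Fin K, a k j * s M k ω := by
    intro ω j
    have hl : ∀ l : Fin L', ((F l).mulVec (d (i - (κ l : ℤ)) ω)) j
        = ∑ k : Fin K, ((1 / (Real.sqrt K : ℂ)) * (Ek k *
            (((F l).mulVec (u k)) j *
              Complex.exp (-(Complex.I * 2 * (Real.pi : ℂ) * (k.1 : ℂ) * ((κ l : ℕ) : ℂ) / (K : ℂ)))))) *
            s M k ω := by
      intro l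
      simp only [Matrix.mulVec, dotProduct, hd, hmshift l, ← hM, hsplit l, Finset.mul_sum]
      rw [Finset.sum_comm]
      refine Finset.sum_congr rfl fun k _ => ?_
      simp only [Matrix.mulVec, dotProduct, Finset.sum_mul, Finset.mul_sum]
      refine Finset.sum_congr rfl fun j' _ => ?_
      ring
    rw [Finset.sum_congr rfl fun l _ => hl l, Finset.sum_comm]
    refine Finset.sum_congr rfl fun k _ => ?_
    rw [ha, hc]
    simp only [Finset.mul_sum, Finset.sum_mul]
  -- orthonormality for fixed symbol M
  have horth : ∀ k k' : Fin K,
      ∫ ω, s M k ω * (starRingEnd ℂ) (s M k' ω) ∂ℙ = if k = k' then 1 else 0 := by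
    intro k k'
    rw [hsorth M M k k']
    simp
  have haux := fun j : Fin Mt =>
    norm_sq_sum_aux ℙ (fun k => s M k) (fun k => hs2 M k) horth (fun k => a k j)
  have hfun : (fun ω => ∑ j : Fin Mt, ‖∑ l : Fin L', ((F l).mulVec (d (i - (κ l : ℤ)) ω)) j‖ ^ 2)
      = fun ω => ∑ j : Fin Mt, ‖∑ k : Fin K, a k j * s M k ω‖ ^ 2 := by
    funext ω
    exact Finset.sum_congr rfl fun j _ => by rw [hpt ω j]
  rw [hfun, integral_finset_sum _ fun j _ => (haux j).1]
  have hsum : ∀ j : Fin Mt, ∫ ω, ‖∑ k : Fin K, a k j * s M k ω‖ ^ 2 ∂ℙ = ∑ k : Fin K, ‖a k j‖ ^ 2 :=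
    fun j => (haux j).2
  rw [Finset.sum_congr rfl fun j _ => hsum j]
  -- compute norms of the coefficients
  have hEknorm : ∀ k : Fin K, ‖Ek k‖ = 1 := by
    intro k
    have : Complex.I * 2 * (Real.pi : ℂ) * (k.1 : ℂ) * ((nsym i : ℤ) : ℂ) / (K : ℂ)
        = ((2 * Real.pi * (k.1 : ℝ) * ((nsym i : ℤ) : ℝ) / (K : ℝ) : ℝ) : ℂ) * Complex.I := by
      push_cast
      ring
    rw [hEk]
    simp only [this]
    rw [Complex.norm_exp_ofReal_mul_I]
  have hK0 : (0:ℝ) < (K : ℝ) := by exact_mod_cast (by omega : 0 < K)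
  have hanorm : ∀ (k : Fin K) (j : Fin Mt), ‖a k j‖ ^ 2 = (1 / (K : ℝ)) * ‖c k j‖ ^ 2 := by
    intro k j
    rw [ha]
    simp only [norm_mul, hEknorm k, one_mul, norm_div, norm_one]
    have : ‖((Real.sqrt K : ℝ) : ℂ)‖ = Real.sqrt K := by
      rw [Complex.norm_real, Real.norm_eq_abs, abs_of_nonneg (Real.sqrt_nonneg _)]
    rw [this, mul_pow, div_pow, one_pow, Real.sq_sqrt (le_of_lt hK0)]
  rw [Finset.sum_congr rfl fun j _ => Finset.sum_congr rfl fun k _ => hanorm k j,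
    Finset.sum_comm, Finset.mul_sum]
  exact Finset.sum_congr rfl fun k _ => by rw [Finset.mul_sum]
end

section
/- (Frequency-domain channel lies in the range of V_k.) Let h_1,…,h_L ∈ ℂ^M and let n_1 < n_2 < ⋯ < n_L be integers with n_max := n_L. Fix integers 1 ≤ L' ≤ L, D ≥ 0, K ≥ 1, a real σ > 0, and a sub-carrier index k ∈ {0,…,K−1}. Set κ_{l'} := n_max − n_{L−L'+l'} for l' = 1,…,L' and L_{l'} := {l ∈ {1,…,L} : n_l + κ_{l'} ∉ [n_max − D, n_max]}. For each l' let H̄_{l'}^⊥ ∈ ℂ^{M × r̄_{l'}} be any matrix whose columns form an orthonormal basis of the orthogonal complement in ℂ^M of span{h_l : l ∈ L_{l'}}. For t ∈ {0,…,D} define g_{l'}[t] := h_l if there exists l ∉ L_{l'} with n_l + κ_{l'} = t + n_max − D, and g_{l'}[t] := 0 otherwise; define g_{kl'} := (1/σ) Σ_{t=0}^{D} g_{l'}[t] e^{i 2π k t/K} ∈ ℂ^M; let g_k ∈ ℂ^{Σ_{l'} r̄_{l'}} be the stacked vector whose l'-th block is (H̄_{l'}^⊥)^H g_{kl'}; and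 let V_k ∈ ℂ^{(Σ_{l'} r̄_{l'}) × M} be the stacked matrix whose l'-th block of rows is e^{i 2π k κ_{l'}/K} (H̄_{l'}^⊥)^H. Then g_k = V_k e_k, where e_k := (1/σ) Σ_{l=1}^L h_l e^{i 2π k (n_l − n_max + D)/K}; in particular, g_k lies in the column space of V_k. -/
/-- Paper's Theorem 2: the frequency-domain effective channel of DAM-OFDM lies in the
column space of `V_k`. With delay pre-compensations `κ_{l'} = n_max − n_{L−L'+l'}`,
matrices `H̄_{l'}^⊥` whose columns form an orthonormal basis of the orthogonal
complement of `span{h_l : l outside the delay window}`, effective channel taps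
`g_{l'}[t]`, `g_{kl'} = (1/σ) Σ_{t=0}^D g_{l'}[t] e^{i2πkt/K}`, the stacked vector
`g_k` (with `l'`-th block `(H̄_{l'}^⊥)^H g_{kl'}`) equals `V_k e_k`, where the `l'`-th
row block of `V_k` is `e^{i2πkκ_{l'}/K} (H̄_{l'}^⊥)^H` and
`e_k = (1/σ) Σ_l h_l e^{i2πk(n_l − n_max + D)/K}`; the equality is stated blockwise. -/
theorem dam_ofdm_channel_in_range_Vk
    (M L L' : ℕ) (hL : 1 ≤ L) (hL'1 : 1 ≤ L') (hL'L : L' ≤ L)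
    (D K : ℕ) (hK : 1 ≤ K) (σ : ℝ) (hσ : 0 < σ) (k : Fin K)
    (h : Fin L → Fin M → ℂ)
    (n : Fin L → ℤ) (hmono : StrictMono n)
    (nmax : ℤ) (hnmax : nmax = n ⟨L - 1, by omega⟩)
    (κ : Fin L' → ℤ)
    (hκ : ∀ l' : Fin L', κ l' = nmax - n ⟨L - L' + l'.1, by omega⟩)
    (r : Fin L' → ℕ)
    (Hp : (l' : Fin L') → Matrix (Fin M) (Fin (r l')) ℂ)
    -- the columns of `Hp l'` are orthonormal,
    (horthonormal : ∀ (l' : Fin L') (a b : Fin (r l')),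
      (∑ i : Fin M, (starRingEnd ℂ) (Hp l' i a) * Hp l' i b) = if a = b then 1 else 0)
    -- orthogonal to every path outside the desired delay window,
    (hperp : ∀ (l' : Fin L') (l : Fin L),
      (n l + κ l' < nmax - (D : ℤ) ∨ nmax < n l + κ l') →
      ∀ a : Fin (r l'), (∑ i : Fin M, (starRingEnd ℂ) (Hp l' i a) * h l i) = 0)
    -- and they span the whole orthogonal complement of those paths.
    (hspan : ∀ (l' : Fin L') (v : Fin M → ℂ),
      (∀ l : Fin L, (n l + κ l' < nmax - (D : ℤ) ∨ nmax < n l + κ l') →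
        (∑ i : Fin M, (starRingEnd ℂ) (h l i) * v i) = 0) →
      v ∈ Submodule.span ℂ (Set.range fun a : Fin (r l') => fun i : Fin M => Hp l' i a))
    (g : Fin L' → ℕ → Fin M → ℂ)
    (hg1 : ∀ (l' : Fin L') (t : ℕ) (l : Fin L), t ≤ D →
      ¬(n l + κ l' < nmax - (D : ℤ) ∨ nmax < n l + κ l') →
      n l + κ l' = (t : ℤ) + (nmax - (D : ℤ)) → g l' t = h l)
    (hg2 : ∀ (l' : Fin L') (t : ℕ), t ≤ D →
      (¬ ∃ l : Fin L, ¬(n l + κ l' < nmax - (D : ℤ) ∨ nmax < n l + κ l') ∧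
          n l + κ l' = (t : ℤ) + (nmax - (D : ℤ))) → g l' t = 0) :
    ∀ (l' : Fin L') (a : Fin (r l')),
      (∑ i : Fin M, (starRingEnd ℂ) (Hp l' i a) *
          ((1 / (σ : ℂ)) * ∑ t ∈ Finset.range (D + 1),
            g l' t i * Complex.exp (Complex.I * 2 * (Real.pi : ℂ) * (k.1 : ℂ) * (t : ℂ) / (K : ℂ)))) =
      Complex.exp (Complex.I * 2 * (Real.pi : ℂ) * (k.1 : ℂ) * ((κ l' : ℤ) : ℂ) / (K : ℂ)) *
        ∑ i : Fin M, (starRingEnd ℂ) (Hp l' i a) *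
          ((1 / (σ : ℂ)) * ∑ l : Fin L,
            h l i * Complex.exp (Complex.I * 2 * (Real.pi : ℂ) * (k.1 : ℂ) *
              ((n l - nmax + (D : ℤ) : ℤ) : ℂ) / (K : ℂ))) := by
  intro l' a
  classical
  set c : ℂ := Complex.I * 2 * (Real.pi : ℂ) * (k.1 : ℂ) with hc
  set A : ℕ → ℂ := fun t => ∑ i : Fin M, (starRingEnd ℂ) (Hp l' i a) * g l' t i with hA
  set B : Fin L → ℂ := fun l => ∑ i : Fin M, (starRingEnd ℂ) (Hp l' i a) * h l i with hB
  set P : Fin L → Prop := fun l => n l + κ l' < nmax - (D : ℤ) ∨ nmax < n l + κ l' with hP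
  set Q : ℕ → Prop := fun t => ∃ l : Fin L, ¬ P l ∧ n l + κ l' = (t : ℤ) + (nmax - (D : ℤ))
    with hQ
  have lhs_eq : (∑ i : Fin M, (starRingEnd ℂ) (Hp l' i a) *
      ((1 / (σ : ℂ)) * ∑ t ∈ Finset.range (D + 1),
        g l' t i * Complex.exp (c * (t : ℂ) / (K : ℂ)))) =
      (1 / (σ : ℂ)) * ∑ t ∈ Finset.range (D + 1),
        A t * Complex.exp (c * (t : ℂ) / (K : ℂ)) := by
    simp only [hA, Finset.mul_sum, Finset.sum_mul]
    rw [Finset.sum_comm]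
    exact Finset.sum_congr rfl fun t _ => Finset.sum_congr rfl fun i _ => by ring
  have rhs_eq : Complex.exp (c * ((κ l' : ℤ) : ℂ) / (K : ℂ)) *
      ∑ i : Fin M, (starRingEnd ℂ) (Hp l' i a) *
        ((1 / (σ : ℂ)) * ∑ l : Fin L,
          h l i * Complex.exp (c * ((n l - nmax + (D : ℤ) : ℤ) : ℂ) / (K : ℂ))) =
      (1 / (σ : ℂ)) * ∑ l : Fin L,
        B l * Complex.exp (c * ((n l + κ l' - nmax + (D : ℤ) : ℤ) : ℂ) / (K : ℂ)) := by
    simp only [hB, Finset.mul_sum, Finset.sum_mul]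
    rw [Finset.sum_comm]
    refine Finset.sum_congr rfl fun l _ => Finset.sum_congr rfl fun i _ => ?_
    rw [show Complex.exp (c * ((κ l' : ℤ) : ℂ) / (K : ℂ)) *
        ((starRingEnd ℂ) (Hp l' i a) * (1 / (σ : ℂ) *
          (h l i * Complex.exp (c * ((n l - nmax + (D : ℤ) : ℤ) : ℂ) / (K : ℂ))))) =
        (starRingEnd ℂ) (Hp l' i a) * h l i *
          (Complex.exp (c * ((κ l' : ℤ) : ℂ) / (K : ℂ)) *
            Complex.exp (c * ((n l - nmax + (D : ℤ) : ℤ) : ℂ) / (K : ℂ))) * (1 / (σ : ℂ))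
        from by ring]
    rw [← Complex.exp_add, ← add_div, ← mul_add]
    push_cast
    ring_nf
  rw [lhs_eq, rhs_eq]
  congr 1
  -- drop vanishing terms on the right: out-of-window paths
  have rzero : ∀ l : Fin L, l ∈ Finset.univ \ Finset.univ.filter (fun l => ¬ P l) →
      B l * Complex.exp (c * ((n l + κ l' - nmax + (D : ℤ) : ℤ) : ℂ) / (K : ℂ)) = 0 := by
    intro l hl
    simp only [Finset.mem_sdiff, Finset.mem_filter, Finset.mem_univ, true_and, not_not] at hl
    rw [hB]
    simp [hperp l' l hl a]
  -- drop vanishing terms on the left: taps with no matching path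
  have lzero : ∀ t : ℕ, t ∈ Finset.range (D + 1) \ (Finset.range (D + 1)).filter Q →
      A t * Complex.exp (c * (t : ℂ) / (K : ℂ)) = 0 := by
    intro t ht
    simp only [Finset.mem_sdiff, Finset.mem_filter, Finset.mem_range, not_and, not_exists] at ht
    have ht' : ¬ Q t := by
      intro hq
      exact (ht.2 ht.1) hq
    have hgt : g l' t = 0 := hg2 l' t (by omega) (by simpa [hQ, hP] using ht')
    simp [hA, hgt]
  rw [← Finset.sum_subset (Finset.filter_subset Q (Finset.range (D + 1)))
      (fun t ht1 ht2 => lzero t (Finset.mem_sdiff.mpr ⟨ht1, ht2⟩)),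
    ← Finset.sum_subset (Finset.subset_univ (Finset.univ.filter (fun l => ¬ P l)))
      (fun l hl1 hl2 => rzero l (Finset.mem_sdiff.mpr ⟨hl1, hl2⟩))]
  -- bijection between in-window paths and taps
  refine (Finset.sum_bij
    (i := fun (l : Fin L) (_ : l ∈ Finset.univ.filter (fun l => ¬ P l)) =>
      (n l + κ l' - (nmax - (D : ℤ))).toNat) ?_ ?_ ?_ ?_).symm
  · intro l hl
    simp only [Finset.mem_filter, Finset.mem_univ, true_and, hP] at hl
    push_neg at hl
    have h1 : (0 : ℤ) ≤ n l + κ l' - (nmax - (D : ℤ)) := by omega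
    have h2 : n l + κ l' - (nmax - (D : ℤ)) ≤ (D : ℤ) := by omega
    refine Finset.mem_filter.mpr ⟨Finset.mem_range.mpr (by omega), ⟨l, ?_, by omega⟩⟩
    simp only [hP]; omega
  · intro l1 hl1 l2 hl2 heq
    simp only [Finset.mem_filter, Finset.mem_univ, true_and, hP] at hl1 hl2
    push_neg at hl1 hl2
    have : n l1 + κ l' - (nmax - (D : ℤ)) = n l2 + κ l' - (nmax - (D : ℤ)) := by omega
    exact hmono.injective (by omega)
  · intro t ht
    simp only [Finset.mem_filter, Finset.mem_range, hQ] at ht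
    obtain ⟨ht1, l, hl, hlt⟩ := ht
    refine ⟨l, Finset.mem_filter.mpr ⟨Finset.mem_univ l, hl⟩, ?_⟩
    omega
  · intro l hl
    simp only [Finset.mem_filter, Finset.mem_univ, true_and, hP] at hl
    push_neg at hl
    set t := (n l + κ l' - (nmax - (D : ℤ))).toNat with htdef
    have htz : (t : ℤ) = n l + κ l' - (nmax - (D : ℤ)) := by omega
    have htD : t ≤ D := by omega
    have hgt : g l' t = h l := hg1 l' t l htD (by omega) (by omega)
    have hAB : A t = B l := by simp [hA, hB, hgt]
    rw [hAB]
    congr 2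
    have : ((n l + κ l' - nmax + (D : ℤ) : ℤ) : ℂ) = (t : ℂ) := by
      rw [show (n l + κ l' - nmax + (D : ℤ) : ℤ) = (t : ℤ) by omega]
      push_cast; ring
    rw [this]
end

section
/- (Optimal joint frequency- and time-domain beamforming for DAM-OFDM.) For k = 0,…,K−1 let V_k ∈ ℂ^{R×M} and e_k ∈ ℂ^M, and let Π_k denote the orthogonal projection of ℂ^M onto the column space of V_k^H. Assume Π_k e_k ≠ 0 for every k, set g_k := ‖Π_k e_k‖², and let P > 0. Let ν > 0 satisfy Σ_{k=0}^{K−1} max(1/ν − 1/g_k, 0) = KP and put μ_k^⋆ := max(1/ν − 1/g_k, 0). Then: (i) for every tuple (w_0,…,w_{K−1}) with w_k ∈ ℂ^R satisfying the power constraint Σ_{k=0}^{K−1} ‖V_k^H w_k‖² ≤ KP, one has (1/K) Σ_{k=0}^{K−1} log₂(1 + |e_k^H V_k^H w_k|²) ≤ (1/K) Σ_{k=0}^{K−1} log₂(1 + μ_k^⋆ g_k); and (ii) the bound is attained by a feasible tuple, namely any (w_k^⋆) with V_k^H w_k^⋆ = √(μ_k^⋆) · Π_k e_k/‖Π_k e_k‖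 (which exists since Π_k e_k lies in the range of V_k^H, and satisfies the power constraint with equality). -/
open Matrix

lemma dam_log_bound {x y : ℝ} (hx : 0 ≤ x) (hy : 0 ≤ y) :
    Real.log (1 + x) - Real.log (1 + y) ≤ (x - y) / (1 + y) := by
  have h1 : (0:ℝ) < 1 + y := by linarith
  have h2 : (0:ℝ) < 1 + x := by linarith
  have h := Real.log_le_sub_one_of_pos (x := (1+x)/(1+y)) (by positivity)
  rw [Real.log_div h2.ne' h1.ne'] at h
  have heq : (1+x)/(1+y) - 1 = (x - y)/(1+y) := by field_simp; ring
  linarith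

lemma dam_wf_step {ν gk μk p : ℝ} (hν : 0 < ν) (hg : 0 < gk)
    (hμ : μk = max (1/ν - 1/gk) 0) (hp : 0 ≤ p) :
    Real.log (1 + gk * p) - Real.log (1 + μk * gk) ≤ ν * (p - μk) := by
  have hμ0 : 0 ≤ μk := hμ ▸ le_max_right _ _
  have h := dam_log_bound (mul_nonneg hg.le hp) (mul_nonneg hμ0 hg.le)
  rcases le_or_gt (1/ν) (1/gk) with hc | hc
  · have hμz : μk = 0 := by rw [hμ, max_eq_right]; linarith
    have hgν : gk ≤ ν := by
      rw [div_le_div_iff₀ hν hg] at hc; linarith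
    subst hμz
    have h' : Real.log (1 + gk * p) - Real.log (1 + 0 * gk) ≤ (gk*p - 0*gk)/(1 + 0*gk) := h
    have : (gk*p - 0*gk)/(1 + 0*gk) = gk * p := by ring
    rw [this] at h'
    nlinarith
  · have hμ' : μk = 1/ν - 1/gk := by rw [hμ, max_eq_left]; linarith
    have h1 : 1 + μk * gk = gk/ν := by
      rw [hμ']; field_simp; ring
    have h2 : (gk * p - μk * gk)/(gk/ν) = ν * (p - μk) := by
      field_simp
    rw [h1] at h
    rw [h1]
    linarith

lemma dam_cs {M : ℕ} (a b : Fin M → ℂ) :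
    ‖∑ j, (starRingEnd ℂ) (a j) * b j‖ ^ 2 ≤ (∑ j, ‖a j‖^2) * (∑ j, ‖b j‖^2) := by
  have hA : (0:ℝ) ≤ ∑ j, ‖a j‖^2 := Finset.sum_nonneg fun _ _ => sq_nonneg _
  have hB : (0:ℝ) ≤ ∑ j, ‖b j‖^2 := Finset.sum_nonneg fun _ _ => sq_nonneg _
  let a' : EuclideanSpace ℂ (Fin M) := WithLp.toLp 2 a
  let b' : EuclideanSpace ℂ (Fin M) := WithLp.toLp 2 b
  have hinner : (inner ℂ a' b' : ℂ) = ∑ j, (starRingEnd ℂ) (a j) * b j := by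
    simp [a', b', PiLp.inner_apply, RCLike.inner_apply, mul_comm]
  have hcs := norm_inner_le_norm (𝕜 := ℂ) a' b'
  have hna : ‖a'‖ = Real.sqrt (∑ j, ‖a j‖^2) := by rw [EuclideanSpace.norm_eq]
  have hnb : ‖b'‖ = Real.sqrt (∑ j, ‖b j‖^2) := by rw [EuclideanSpace.norm_eq]
  rw [hinner, hna, hnb] at hcs
  have h2 : ‖∑ j, (starRingEnd ℂ) (a j) * b j‖^2 ≤
      (Real.sqrt (∑ j, ‖a j‖^2) * Real.sqrt (∑ j, ‖b j‖^2))^2 :=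
    pow_le_pow_left₀ (norm_nonneg _) hcs 2
  have h3 : (Real.sqrt (∑ j, ‖a j‖^2) * Real.sqrt (∑ j, ‖b j‖^2))^2
      = (∑ j, ‖a j‖^2) * (∑ j, ‖b j‖^2) := by
    rw [mul_pow, Real.sq_sqrt hA, Real.sq_sqrt hB]
  linarith

lemma dam_conj_mul_self (z : ℂ) : (starRingEnd ℂ) z * z = (‖z‖ : ℂ) ^ 2 := by
  rw [mul_comm, Complex.mul_conj, Complex.normSq_eq_norm_sq]
  push_cast
  ring

/-- Paper's Theorem 3: optimal joint frequency- and time-domain beamforming for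
DAM-OFDM. With `Proj k` the orthogonal projection onto the column space of `V_k^H`,
`g_k = ‖Proj k e_k‖² > 0`, and water-filling levels `μ_k^⋆ = max(1/ν − 1/g_k, 0)`
with `Σ_k μ_k^⋆ = KP`: (i) every `(w_k)` with `Σ_k ‖V_k^H w_k‖² ≤ KP` satisfies
`(1/K) Σ_k log₂(1 + |e_k^H V_k^H w_k|²) ≤ (1/K) Σ_k log₂(1 + μ_k^⋆ g_k)`; and
(ii) the bound is attained by a feasible tuple with
`V_k^H w_k^⋆ = √(μ_k^⋆) Proj k e_k / ‖Proj k e_k‖`, which exists and meets the power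
constraint with equality. -/
theorem dam_ofdm_optimal_joint_beamforming
    (R M K : ℕ) (hK : 1 ≤ K)
    (V : Fin K → Matrix (Fin R) (Fin M) ℂ) (e : Fin K → Fin M → ℂ)
    (Proj : Fin K → ((Fin M → ℂ) →ₗ[ℂ] (Fin M → ℂ)))
    (hRange : ∀ (k : Fin K) (x : Fin M → ℂ),
      Proj k x ∈ LinearMap.range (Matrix.mulVecLin (V k)ᴴ))
    (hOrth : ∀ (k : Fin K) (x : Fin M → ℂ), ∀ v ∈ LinearMap.range (Matrix.mulVecLin (V k)ᴴ),
      (∑ j : Fin M, (starRingEnd ℂ) (v j) * (x j - Proj k x j)) = 0)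
    (hne : ∀ k, Proj k (e k) ≠ 0)
    (g : Fin K → ℝ) (hg : ∀ k, g k = ∑ j : Fin M, ‖Proj k (e k) j‖ ^ 2)
    (P : ℝ) (hP : 0 < P)
    (ν : ℝ) (hν : 0 < ν)
    (hwf : (∑ k : Fin K, max (1 / ν - 1 / g k) 0) = K * P)
    (μ : Fin K → ℝ) (hμ : ∀ k, μ k = max (1 / ν - 1 / g k) 0) :
    (∀ w : Fin K → Fin R → ℂ,
        (∑ k : Fin K, ∑ j : Fin M, ‖((V k)ᴴ.mulVec (w k)) j‖ ^ 2) ≤ K * P →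
        (1 / (K : ℝ)) * ∑ k : Fin K,
            Real.logb 2 (1 + ‖∑ j : Fin M, (starRingEnd ℂ) (e k j) * ((V k)ᴴ.mulVec (w k)) j‖ ^ 2) ≤
          (1 / (K : ℝ)) * ∑ k : Fin K, Real.logb 2 (1 + μ k * g k)) ∧
    (∃ w : Fin K → Fin R → ℂ, ∀ k : Fin K,
        (V k)ᴴ.mulVec (w k) =
          ((Real.sqrt (μ k) / Real.sqrt (g k) : ℝ) : ℂ) • Proj k (e k)) ∧
    (∀ w : Fin K → Fin R → ℂ,
        (∀ k : Fin K, (V k)ᴴ.mulVec (w k) =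
          ((Real.sqrt (μ k) / Real.sqrt (g k) : ℝ) : ℂ) • Proj k (e k)) →
        (∑ k : Fin K, ∑ j : Fin M, ‖((V k)ᴴ.mulVec (w k)) j‖ ^ 2) = K * P ∧
        (1 / (K : ℝ)) * ∑ k : Fin K,
            Real.logb 2 (1 + ‖∑ j : Fin M, (starRingEnd ℂ) (e k j) * ((V k)ᴴ.mulVec (w k)) j‖ ^ 2) =
          (1 / (K : ℝ)) * ∑ k : Fin K, Real.logb 2 (1 + μ k * g k)) := by
  -- basic positivity facts
  have hgpos : ∀ k, 0 < g k := by
    intro k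
    obtain ⟨j, hj⟩ : ∃ j, Proj k (e k) j ≠ 0 := by
      by_contra h; push_neg at h; exact hne k (funext h)
    have h1 : (0:ℝ) < ‖Proj k (e k) j‖^2 := pow_pos (norm_pos_iff.mpr hj) 2
    have h2 : ‖Proj k (e k) j‖^2 ≤ ∑ j : Fin M, ‖Proj k (e k) j‖ ^ 2 :=
      Finset.single_le_sum (f := fun i => ‖Proj k (e k) i‖^2)
        (fun i _ => sq_nonneg _) (Finset.mem_univ j)
    rw [hg k]; linarith
  have hμ0 : ∀ k, 0 ≤ μ k := fun k => (hμ k) ▸ le_max_right _ _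
  have hsumμ : ∑ k, μ k = K * P := by
    rw [← hwf]; exact Finset.sum_congr rfl fun k _ => hμ k
  have hμg0 : ∀ k, 0 ≤ μ k * g k := fun k => mul_nonneg (hμ0 k) (hgpos k).le
  -- orthogonality: inner products against range vectors see only the projection
  have horth' : ∀ (k : Fin K) (v : Fin M → ℂ), v ∈ LinearMap.range (Matrix.mulVecLin (V k)ᴴ) →
      (∑ j, (starRingEnd ℂ) (v j) * e k j) = ∑ j, (starRingEnd ℂ) (v j) * Proj k (e k) j := by
    intro k v hv
    have h := hOrth k (e k) v hv
    have h2 : (∑ j, ((starRingEnd ℂ) (v j) * e k j - (starRingEnd ℂ) (v j) * Proj k (e k) j)) = 0 := by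
      rw [← h]; exact Finset.sum_congr rfl fun j _ => by ring
    rw [Finset.sum_sub_distrib] at h2
    exact sub_eq_zero.mp h2
  -- key per-subcarrier Cauchy–Schwarz bound through the projection
  have hkey : ∀ (k : Fin K) (v : Fin M → ℂ), v ∈ LinearMap.range (Matrix.mulVecLin (V k)ᴴ) →
      ‖∑ j, (starRingEnd ℂ) (e k j) * v j‖ ^ 2 ≤ g k * (∑ j, ‖v j‖^2) := by
    intro k v hv
    have hflip : (∑ j, (starRingEnd ℂ) (e k j) * v j)
        = (starRingEnd ℂ) (∑ j, (starRingEnd ℂ) (v j) * e k j) := by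
      rw [map_sum]
      exact Finset.sum_congr rfl fun j _ => by simp [_root_.map_mul, mul_comm]
    have hnorm : ‖∑ j, (starRingEnd ℂ) (e k j) * v j‖
        = ‖∑ j, (starRingEnd ℂ) (v j) * e k j‖ := by
      rw [hflip, RCLike.norm_conj]
    rw [hnorm, horth' k v hv]
    calc ‖∑ j, (starRingEnd ℂ) (v j) * Proj k (e k) j‖ ^ 2
        ≤ (∑ j, ‖v j‖^2) * (∑ j, ‖Proj k (e k) j‖^2) := dam_cs v (Proj k (e k))
      _ = g k * (∑ j, ‖v j‖^2) := by rw [hg k]; ring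
  -- the key inner product with the projection itself
  have hge : ∀ k, (∑ j, (starRingEnd ℂ) (e k j) * Proj k (e k) j) = ((g k : ℝ) : ℂ) := by
    intro k
    have h1 := horth' k (Proj k (e k)) (hRange k (e k))
    have h2 : (∑ j, (starRingEnd ℂ) (Proj k (e k) j) * Proj k (e k) j) = ((g k:ℝ):ℂ) := by
      rw [hg k]; push_cast
      exact Finset.sum_congr rfl fun j _ => dam_conj_mul_self _
    have h3 : (∑ j, (starRingEnd ℂ) (e k j) * Proj k (e k) j)
        = (starRingEnd ℂ) (∑ j, (starRingEnd ℂ) (Proj k (e k) j) * e k j) := by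
      rw [map_sum]
      exact Finset.sum_congr rfl fun j _ => by simp [_root_.map_mul, mul_comm]
    rw [h3, h1, h2, Complex.conj_ofReal]
  refine ⟨?_, ?_, ?_⟩
  · -- part (i): upper bound for every feasible w
    intro w hpow
    let p : Fin K → ℝ := fun k => ∑ j, ‖((V k)ᴴ.mulVec (w k)) j‖^2
    have hp0 : ∀ k, 0 ≤ p k := fun k => Finset.sum_nonneg fun _ _ => sq_nonneg _
    have hpsum : (∑ k, p k) ≤ K * P := hpow
    have hmem : ∀ k, (V k)ᴴ.mulVec (w k) ∈ LinearMap.range (Matrix.mulVecLin (V k)ᴴ) :=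
      fun k => ⟨w k, rfl⟩
    have hlog2 : (0:ℝ) < Real.log 2 := Real.log_pos one_lt_two
    have h1 : ∀ k, Real.log (1 + ‖∑ j, (starRingEnd ℂ) (e k j) * ((V k)ᴴ.mulVec (w k)) j‖^2)
        ≤ Real.log (1 + g k * p k) := by
      intro k
      apply Real.log_le_log (by positivity)
      have := hkey k _ (hmem k)
      linarith
    have h2 : ∀ k, Real.log (1 + g k * p k) - Real.log (1 + μ k * g k) ≤ ν * (p k - μ k) :=
      fun k => dam_wf_step hν (hgpos k) (hμ k) (hp0 k)
    have h3 : (∑ k, (Real.log (1 + g k * p k) - Real.log (1 + μ k * g k)))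
        ≤ ∑ k, ν * (p k - μ k) := Finset.sum_le_sum fun k _ => h2 k
    rw [Finset.sum_sub_distrib, ← Finset.mul_sum, Finset.sum_sub_distrib] at h3
    have h4 : (∑ k, p k) - (∑ k, μ k) ≤ 0 := by rw [hsumμ]; linarith
    have h5 : ν * ((∑ k, p k) - (∑ k, μ k)) ≤ 0 := mul_nonpos_of_nonneg_of_nonpos hν.le h4
    have h6 : (∑ k, Real.log (1 + ‖∑ j, (starRingEnd ℂ) (e k j) * ((V k)ᴴ.mulVec (w k)) j‖^2))
        ≤ ∑ k, Real.log (1 + g k * p k) := Finset.sum_le_sum fun k _ => h1 k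
    have hfin : (∑ k, Real.log (1 + ‖∑ j, (starRingEnd ℂ) (e k j) * ((V k)ᴴ.mulVec (w k)) j‖^2))
        ≤ ∑ k, Real.log (1 + μ k * g k) := by linarith
    have hKnn : (0:ℝ) ≤ 1 / (K:ℝ) := by positivity
    apply mul_le_mul_of_nonneg_left _ hKnn
    simp only [Real.logb, div_eq_mul_inv, ← Finset.sum_mul]
    apply mul_le_mul_of_nonneg_right hfin (by positivity)
  · -- part (ii): existence
    choose u hu using fun k => hRange k (e k)
    refine ⟨fun k => ((Real.sqrt (μ k) / Real.sqrt (g k) : ℝ) : ℂ) • u k, fun k => ?_⟩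
    have : (V k)ᴴ.mulVec (((Real.sqrt (μ k) / Real.sqrt (g k) : ℝ) : ℂ) • u k)
        = (Matrix.mulVecLin (V k)ᴴ) (((Real.sqrt (μ k) / Real.sqrt (g k) : ℝ) : ℂ) • u k) := rfl
    rw [this, _root_.map_smul, hu k]
  · -- part (iii): the optimal tuple is feasible with equality and attains the bound
    intro w hw
    have hc0 : ∀ k, (0:ℝ) ≤ Real.sqrt (μ k) / Real.sqrt (g k) :=
      fun k => div_nonneg (Real.sqrt_nonneg _) (Real.sqrt_nonneg _)
    have hc2 : ∀ k, (Real.sqrt (μ k) / Real.sqrt (g k))^2 = μ k / g k := by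
      intro k
      rw [div_pow, Real.sq_sqrt (hμ0 k), Real.sq_sqrt (hgpos k).le]
    have hpower : ∀ k, (∑ j, ‖((V k)ᴴ.mulVec (w k)) j‖^2) = μ k := by
      intro k
      rw [hw k]
      have hterm : ∀ j, ‖(((Real.sqrt (μ k) / Real.sqrt (g k) : ℝ) : ℂ) • Proj k (e k)) j‖^2
          = (Real.sqrt (μ k) / Real.sqrt (g k))^2 * ‖Proj k (e k) j‖^2 := by
        intro j
        simp only [Pi.smul_apply, norm_smul, Complex.norm_real, Real.norm_eq_abs,
          abs_of_nonneg (hc0 k), mul_pow]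
      calc (∑ j, ‖(((Real.sqrt (μ k) / Real.sqrt (g k) : ℝ) : ℂ) • Proj k (e k)) j‖^2)
          = ∑ j, (Real.sqrt (μ k) / Real.sqrt (g k))^2 * ‖Proj k (e k) j‖^2 :=
            Finset.sum_congr rfl fun j _ => hterm j
        _ = (Real.sqrt (μ k) / Real.sqrt (g k))^2 * (∑ j, ‖Proj k (e k) j‖^2) := by
            rw [Finset.mul_sum]
        _ = (μ k / g k) * g k := by rw [hc2 k, hg k]
        _ = μ k := by field_simp [(hgpos k).ne']
    have hobj : ∀ k, ‖∑ j, (starRingEnd ℂ) (e k j) * ((V k)ᴴ.mulVec (w k)) j‖^2 = μ k * g k := by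
      intro k
      rw [hw k]
      have hpull : (∑ j, (starRingEnd ℂ) (e k j) *
            ((((Real.sqrt (μ k) / Real.sqrt (g k) : ℝ) : ℂ) • Proj k (e k)) j))
          = ((Real.sqrt (μ k) / Real.sqrt (g k) : ℝ) : ℂ)
              * ∑ j, (starRingEnd ℂ) (e k j) * Proj k (e k) j := by
        rw [Finset.mul_sum]
        exact Finset.sum_congr rfl fun j _ => by
          simp only [Pi.smul_apply, smul_eq_mul]; ring
      rw [hpull, hge k, norm_mul, Complex.norm_real, Complex.norm_real, Real.norm_eq_abs,
        Real.norm_eq_abs, abs_of_nonneg (hc0 k), abs_of_nonneg (hgpos k).le, mul_pow, hc2 k]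
      field_simp [(hgpos k).ne']
    constructor
    · rw [Finset.sum_congr rfl fun k _ => hpower k, hsumμ]
    · congr 1
      exact Finset.sum_congr rfl fun k _ => by rw [hobj k]
end
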